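/- If x₁ lies in the quantization region of a logarithmic quantizer with quantized value q₁ (component-wise, with parameter η ∈ (0,1)), then ‖x₁ - q₁‖ ≤ θ‖q₁‖ where θ = η/(1-η) and ‖·‖ is the infinity norm, provided no component of q₁ is zero. -/

import Mathlib

/-! For a component `x` of the same sign as `q` we have `|x - q| = ||x| - |q||`, and the cell
`|q|/(1+η) ≤ |x| ≤ |q|/(1-η)` gives `|x| - |q| ≤ η/(1-η) |q|` and
`|q| - |x| ≤ η/(1+η) |q| ≤ η/(1-η) |q|`. The componentwise bound passes to the sup norm. -/

section

variable {K : Type*} [Field K] [LinearOrder K] [IsStrictOrderedRing K]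

theorem abs_sub_eq_abs_abs_sub_abs_of_mul_nonneg {a b : K} (h : 0 ≤ a * b) :
    |a - b| = |(|a| - |b|)| := by
  rcases mul_nonneg_iff.mp h with ⟨ha, hb⟩ | ⟨ha, hb⟩
  · rw [abs_of_nonneg ha, abs_of_nonneg hb]
  · rw [abs_of_nonpos ha, abs_of_nonpos hb, abs_sub_comm, neg_sub_neg]

theorem abs_sub_abs_le_of_mem_log_cell {η a b : K} (hη₀ : 0 ≤ η) (hη₁ : η < 1)
    (hlo : |b| / (1 + η) ≤ |a|) (hhi : |a| ≤ |b| / (1 - η)) :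
    |(|a| - |b|)| ≤ η / (1 - η) * |b| := by
  have h1m : 0 < 1 - η := sub_pos.mpr hη₁
  have h1p : 0 < 1 + η := by linarith
  rw [le_div_iff₀ h1m] at hhi
  rw [div_le_iff₀ h1p] at hlo
  rw [abs_sub_le_iff, div_mul_eq_mul_div, le_div_iff₀ h1m, le_div_iff₀ h1m]
  constructor <;> nlinarith [abs_nonneg a, abs_nonneg b]

theorem abs_sub_le_of_mem_log_cell {η a b : K} (hη₀ : 0 ≤ η) (hη₁ : η < 1)
    (hlo : |b| / (1 + η) ≤ |a|) (hhi : |a| ≤ |b| / (1 - η)) (hsign : 0 ≤ a * b) :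
    |a - b| ≤ η / (1 - η) * |b| :=
  abs_sub_eq_abs_abs_sub_abs_of_mul_nonneg hsign ▸ abs_sub_abs_le_of_mem_log_cell hη₀ hη₁ hlo hhi

end

theorem pi_norm_sub_le_of_forall_norm_sub_le {ι E : Type*} [Fintype ι]
    [SeminormedAddCommGroup E] {x q : ι → E} {c : ℝ} (hc : 0 ≤ c)
    (h : ∀ i, ‖x i - q i‖ ≤ c * ‖q i‖) : ‖x - q‖ ≤ c * ‖q‖ :=
  (pi_norm_le_iff_of_nonneg (by positivity)).mpr fun i =>
    (h i).trans (mul_le_mul_of_nonneg_left (norm_le_pi_norm q i) hc)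

theorem log_quantizer_region_dist_bound_general {n : ℕ}
    (η : ℝ) (hη : η ∈ Set.Ioo (0 : ℝ) 1)
    (x q : Fin n → ℝ)
    (hlo : ∀ i, |q i| / (1 + η) ≤ |x i|)
    (hhi : ∀ i, |x i| ≤ |q i| / (1 - η))
    (hsign : ∀ i, 0 < x i * q i) :
    ‖x - q‖ ≤ (η / (1 - η)) * ‖q‖ := by
  obtain ⟨hη₀, hη₁⟩ := hη
  refine pi_norm_sub_le_of_forall_norm_sub_le (div_nonneg hη₀.le (sub_pos.mpr hη₁).le) fun i => ?_
  simpa only [Real.norm_eq_abs] using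
    abs_sub_le_of_mem_log_cell hη₀.le hη₁ (hlo i) (hhi i) (hsign i).le

/-- If `x` lies in the quantization region of the (component-wise)
logarithmic quantizer with quantized value `q` whose components are all nonzero
(i.e. for each `i`, `|q i|/(1+η) ≤ |x i| ≤ |q i|/(1-η)` and `x i`, `q i` have the
same sign), then `‖x - q‖ ≤ (η/(1-η)) * ‖q‖` in the infinity norm. -/
theorem log_quantizer_region_dist_bound {n : ℕ}
    (η : ℝ) (hη : η ∈ Set.Ioo (0 : ℝ) 1)
    (x q : Fin n → ℝ)
    (hq0 : ∀ i, q i ≠ 0)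
    (hlo : ∀ i, |q i| / (1 + η) ≤ |x i|)
    (hhi : ∀ i, |x i| ≤ |q i| / (1 - η))
    (hsign : ∀ i, 0 < x i * q i) :
    ‖x - q‖ ≤ (η / (1 - η)) * ‖q‖ :=
  log_quantizer_region_dist_bound_general η hη x q hlo hhi hsign
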